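/- Let q ∈ ℂ, q ≠ 0, let a, b, D be elements of a unital ℂ-star-algebra 𝒜 satisfying the U_q(2) relations, and suppose x, y ∈ 𝒜 commute with each of a, b, D, a*, b*, D* and satisfy xy = q̄·yx. Then (Da*·x − q̄·Db*·y)·(b·x + a·y) = q̄·(b·x + a·y)·(Da*·x − q̄·Db*·y). (This is the computation showing that x ↦ Da*⊗x + (−q̄Db*)⊗y, y ↦ b⊗x + a⊗y extends to a left coaction of 𝒪(U_q(2)) on the quantum plane 𝒪(ℂ_{q̄}²).) -/

import Mathlib

open scoped ComplexConjugate

noncomputable section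

/-- The q-Pochhammer symbol `(α; t)_n = Π_{r=0}^{n-1} (1 - α tʳ)`. -/
noncomputable def qPoch (α t : ℂ) (n : ℕ) : ℂ := ∏ r ∈ Finset.range n, (1 - α * t ^ r)

/-- The Gaussian binomial coefficient `binom(n,m)_t = (t;t)_n / ((t;t)_m (t;t)_{n-m})`. -/
noncomputable def qBinom (t : ℂ) (n m : ℕ) : ℂ :=
  qPoch t t n / (qPoch t t m * qPoch t t (n - m))

/-- Elements `a, b, D` of a unital ℂ-star-algebra satisfy the `U_q(2)` relations. -/
def UqRel (q : ℂ) {A : Type*} [Ring A] [Algebra ℂ A] [StarRing A] (a b D : A) : Prop :=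
  b * a = q • (a * b) ∧
  star a * b = q • (b * star a) ∧
  b * star b = star b * b ∧
  a * star a + b * star b = 1 ∧
  star a * a + ((‖q‖ : ℂ) ^ 2) • (star b * b) = 1 ∧
  a * D = D * a ∧
  b * D = (q ^ 2 / (‖q‖ : ℂ) ^ 2) • (D * b) ∧
  D * star D = 1 ∧ star D * D = 1

private lemma sw_aux {A : Type*} [Ring A] {u v : A} (h : Commute u v) (w : A) :
    u * (v * w) = v * (u * w) := by rw [← mul_assoc, h.eq, mul_assoc]

set_option maxHeartbeats 2000000 in
/-- the quantum-plane relation is preserved under the left coaction of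
`𝒪(U_q(2))` on `𝒪(ℂ_q̄²)`. -/
theorem stmt10 {A : Type*} [Ring A] [Algebra ℂ A] [StarRing A] [StarModule ℂ A]
    (q : ℂ) (hq : q ≠ 0) (a b D : A) (h : UqRel q a b D)
    (x y : A)
    (hx : ∀ z ∈ ({a, b, D, star a, star b, star D} : Set A), Commute x z)
    (hy : ∀ z ∈ ({a, b, D, star a, star b, star D} : Set A), Commute y z)
    (hxy : x * y = (conj q) • (y * x)) :
    (D * star a * x - (conj q) • (D * star b * y)) * (b * x + a * y) =
      (conj q) • ((b * x + a * y) * (D * star a * x - (conj q) • (D * star b * y))) := by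
  obtain ⟨h1, h2, h3, h4, h5, h6, h7, -, -⟩ := h
  have habs : (‖q‖ : ℂ) ≠ 0 := by
    exact_mod_cast norm_ne_zero_iff.mpr hq
  have hA : ((‖q‖ : ℂ)) ^ 2 = q * conj q := by
    rw [Complex.mul_conj]; norm_cast; exact Complex.sq_norm q
  have cxa := hx a (by simp); have cxb := hx b (by simp); have cxD := hx D (by simp)
  have cxsa := hx (star a) (by simp); have cxsb := hx (star b) (by simp)
  have cya := hy a (by simp); have cyb := hy b (by simp); have cyD := hy D (by simp)
  have cysa := hy (star a) (by simp); have cysb := hy (star b) (by simp)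
  -- D * b in terms of b * D
  have hDb : D * b = (((‖q‖ : ℂ) ^ 2) / q ^ 2) • (b * D) := by
    have hs : (((‖q‖ : ℂ) ^ 2) / q ^ 2) * (q ^ 2 / (‖q‖ : ℂ) ^ 2) = 1 := by
      field_simp
    rw [h7, smul_smul, hs, one_smul]
  -- star of h2
  have hba : star b * a = conj q • (a * star b) := by
    calc star b * a = star (star a * b) := by rw [star_mul, star_star]
      _ = star (q • (b * star a)) := by rw [h2]
      _ = conj q • (a * star b) := by
          rw [star_smul, star_mul, star_star, Complex.star_def]
  -- key relation 1
  have K1 : D * (star a * b) = conj q • (b * (D * star a)) := by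
    have hs : q * (((‖q‖ : ℂ) ^ 2) / q ^ 2) = conj q := by
      field_simp; rw [hA]
    rw [h2, mul_smul_comm, ← mul_assoc, hDb, smul_mul_assoc, smul_smul, hs, mul_assoc]
  -- key relation 2
  have K2 : D * (star b * a) = conj q • (a * (D * star b)) := by
    rw [hba, mul_smul_comm, ← mul_assoc, ← h6, mul_assoc]
  -- key relation 3
  have K3 : D * (star a * a) =
      a * (D * star a) + D * (star b * b) - (conj q) ^ 2 • (b * (D * star b)) := by
    have e1 : a * (D * star a) = D - D * (star b * b) := by
      rw [← mul_assoc, h6, mul_assoc, eq_sub_of_add_eq h4, mul_sub, mul_one, h3]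
    have e2 : b * (D * star b) = (q ^ 2 / (‖q‖ : ℂ) ^ 2) • (D * (star b * b)) := by
      rw [← mul_assoc, h7, smul_mul_assoc, mul_assoc, h3]
    have e3 : D * (star a * a) = D - ((‖q‖ : ℂ) ^ 2) • (D * (star b * b)) := by
      rw [eq_sub_of_add_eq h5, mul_sub, mul_one, mul_smul_comm]
    have hs2 : (conj q) ^ 2 * (q ^ 2 / (‖q‖ : ℂ) ^ 2) = ((‖q‖ : ℂ)) ^ 2 := by
      field_simp; rw [show (‖q‖ : ℂ) ^ 4 = ((‖q‖ : ℂ) ^ 2) ^ 2 by ring, hA]; ring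
    rw [e1, e2, e3, smul_smul, hs2]
    module
  -- tail versions
  have K1t : ∀ w : A, D * (star a * (b * w)) = conj q • (b * (D * (star a * w))) := by
    intro w
    have := congrArg (· * w) K1
    simpa only [smul_mul_assoc, mul_assoc] using this
  have K2t : ∀ w : A, D * (star b * (a * w)) = conj q • (a * (D * (star b * w))) := by
    intro w
    have := congrArg (· * w) K2
    simpa only [smul_mul_assoc, mul_assoc] using this
  have K3t : ∀ w : A, D * (star a * (a * w)) =
      a * (D * (star a * w)) + D * (star b * (b * w))
        - (conj q) ^ 2 • (b * (D * (star b * w))) := by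
    intro w
    have := congrArg (· * w) K3
    simpa only [smul_mul_assoc, mul_assoc, add_mul, sub_mul] using this
  have hxyt : ∀ w : A, x * (y * w) = conj q • (y * (x * w)) := by
    intro w
    rw [← mul_assoc, hxy, smul_mul_assoc, mul_assoc]
  -- expand everything
  simp only [sub_mul, mul_add, add_mul, mul_sub, smul_mul_assoc, mul_smul_comm, mul_assoc,
    smul_smul]
  simp only [sw_aux cxa, sw_aux cxb, sw_aux cxD, sw_aux cxsa, sw_aux cxsb,
    sw_aux cya, sw_aux cyb, sw_aux cyD, sw_aux cysa, sw_aux cysb]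
  simp only [hxy, hxyt, mul_smul_comm, smul_smul]
  simp only [K1t, K2t, K3t, mul_smul_comm, smul_smul]
  module
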